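/- Let d ≥ 2, n ≥ 3, and ω = e^{2πi/d}. The n(2d−3)+1 product states of Theorem 2 in (ℂ^d)^{⊗n} — the cyclic states with Σ_j ω^{tj}|j⟩ in slot δ and |d−1⟩ in the next slot for t ∈ {1,...,d−1}, the cyclic states with Σ_j ω^{j}|j⟩ in slot δ and |q⟩ in the next slot for q ∈ {1,...,d−2}, and the stopper state (Σ_j |j⟩)^{⊗n} — are pairwise orthogonal. -/

import Mathlib

noncomputable def rootOfUnity' (d : ℕ) : ℂ := Complex.exp (2 * Real.pi * Complex.I / d)

noncomputable def tensorProdState {n d : ℕ} (f : Fin n → Fin d → ℂ) : (Fin n → Fin d) → ℂ :=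
  fun g => ∏ i, f i (g i)

noncomputable def tensorInner {n d : ℕ} (x y : (Fin n → Fin d) → ℂ) : ℂ :=
  ∑ g : Fin n → Fin d, (starRingEnd ℂ) (x g) * y g

def basisVec (d k : ℕ) : Fin d → ℂ := fun j => if (j : ℕ) = k then 1 else 0

noncomputable def fourierVec (d t : ℕ) : Fin d → ℂ := fun j => rootOfUnity' d ^ (t * (j : ℕ))

/-- cyclic states of Theorem 2: Fourier state with parameter `t` in slot `δ`,
`|d-1⟩` in slot `δ+1` (cyclically), `|0⟩` elsewhere. -/
noncomputable def thm2StateA (n d : ℕ) [NeZero n] (δ : Fin n) (t : Fin d) :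
    Fin n → Fin d → ℂ :=
  fun i => if i = δ then fourierVec d (t : ℕ)
    else if i = δ + 1 then basisVec d (d - 1) else basisVec d 0

/-- cyclic states of Theorem 2: Fourier state with parameter `1` in slot `δ`,
`|q⟩` in slot `δ+1` (cyclically), `|0⟩` elsewhere. -/
noncomputable def thm2StateB (n d : ℕ) [NeZero n] (δ : Fin n) (q : Fin d) :
    Fin n → Fin d → ℂ :=
  fun i => if i = δ then fourierVec d 1
    else if i = δ + 1 then basisVec d (q : ℕ) else basisVec d 0

/-- the stopper state `(Σ_j |j⟩)^{⊗ n}`. -/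
def thm2Stopper (n d : ℕ) : Fin n → Fin d → ℂ := fun _ _ => 1

/-!
The inner product of two product states is the product of the slotwise inner products, so two
product states are orthogonal as soon as one slot has orthogonal factors. Fourier vectors of
distinct frequencies are orthogonal (their inner product is a geometric sum of a nontrivial
`d`-th root of unity), and every factor of the stopper is the frequency-`0` Fourier vector.
Two cyclic states at the same position are separated by slot `δ` or `δ + 1`. At different
positions `δ ≠ δ'`, as `n ≥ 3` the slots `δ + 1` and `δ' + 1` cannot be `δ'` and `δ` at once, so
in one of them a basis vector `|k⟩` with `k ≠ 0` meets `|0⟩`.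
-/

open Matrix

theorem tensorInner_tensorProdState {n d : ℕ} (f f' : Fin n → Fin d → ℂ) :
    tensorInner (tensorProdState f) (tensorProdState f') = ∏ i, star (f i) ⬝ᵥ f' i := by
  simp only [tensorInner, tensorProdState, dotProduct, Fintype.prod_sum, map_prod,
    starRingEnd_apply, Pi.star_apply, ← Finset.prod_mul_distrib]

theorem tensorInner_tensorProdState_eq_zero {n d : ℕ} {f f' : Fin n → Fin d → ℂ} (i : Fin n)
    (h : star (f i) ⬝ᵥ f' i = 0) :
    tensorInner (tensorProdState f) (tensorProdState f') = 0 := by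
  rw [tensorInner_tensorProdState]
  exact Finset.prod_eq_zero (Finset.mem_univ i) h

theorem star_basisVec_dotProduct_basisVec {d k k' : ℕ} (h : k ≠ k') :
    star (basisVec d k) ⬝ᵥ basisVec d k' = 0 := by
  refine Finset.sum_eq_zero fun j _ => ?_
  by_cases hj : (j : ℕ) = k
  · simp [basisVec, hj, h]
  · simp [basisVec, hj]

theorem sum_pow_fin_eq_zero {K : Type*} [Field K] {d : ℕ} {w : K} (hw : w ^ d = 1)
    (hw1 : w ≠ 1) : ∑ j : Fin d, w ^ (j : ℕ) = 0 := by
  rw [Fin.sum_univ_eq_sum_range (w ^ ·), geom_sum_eq hw1, hw, sub_self, zero_div]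

theorem isPrimitiveRoot_rootOfUnity' {d : ℕ} (hd : d ≠ 0) : IsPrimitiveRoot (rootOfUnity' d) d :=
  Complex.isPrimitiveRoot_exp d hd

theorem star_fourierVec_dotProduct_fourierVec {d t t' : ℕ} (ht : t < d) (ht' : t' < d)
    (h : t ≠ t') : star (fourierVec d t) ⬝ᵥ fourierVec d t' = 0 := by
  have hd : d ≠ 0 := by omega
  have hζ := isPrimitiveRoot_rootOfUnity' hd
  simp only [dotProduct, Pi.star_apply, fourierVec]
  set ζ := rootOfUnity' d
  have hζ0 : ζ ≠ 0 := hζ.ne_zero hd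
  have hstar : star ζ = ζ⁻¹ := (Complex.inv_eq_conj (hζ.norm'_eq_one hd)).symm
  have hterm : ∀ j : ℕ, star (ζ ^ (t * j)) * ζ ^ (t' * j) = (ζ ^ t' / ζ ^ t) ^ j := fun j => by
    rw [star_pow, hstar, div_pow, ← pow_mul, ← pow_mul, inv_pow, div_eq_mul_inv, mul_comm]
  simp only [hterm]
  refine sum_pow_fin_eq_zero ?_ ?_
  · rw [div_pow, ← pow_mul, ← pow_mul, pow_mul', pow_mul' ζ t, hζ.pow_eq_one, one_pow, one_pow,
      div_one]
  · rw [Ne, div_eq_one_iff_eq (pow_ne_zero _ hζ0)]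
    exact fun he => h (hζ.pow_inj ht ht' he.symm)

theorem thm2Stopper_apply (n d : ℕ) (i : Fin n) : thm2Stopper n d i = fourierVec d 0 := by
  ext j
  simp [thm2Stopper, fourierVec]

theorem Fin.add_one_ne_self {n : ℕ} [NeZero n] (hn : 2 ≤ n) (δ : Fin n) : δ + 1 ≠ δ := by
  rw [Ne, add_eq_left, Fin.ext_iff, Fin.val_one', Fin.val_zero, Nat.mod_eq_of_lt (by omega)]
  omega

theorem Fin.add_one_add_one_ne_self {n : ℕ} [NeZero n] (hn : 3 ≤ n) (δ : Fin n) :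
    δ + 1 + 1 ≠ δ := by
  rw [Ne, add_assoc, add_eq_left, Fin.ext_iff, Fin.val_add, Fin.val_one',
    Nat.mod_eq_of_lt (by omega : 1 < n), Fin.val_zero, Nat.mod_eq_of_lt (by omega : 1 + 1 < n)]
  omega

def cyclicState (n d : ℕ) [NeZero n] (δ : Fin n) (u v : Fin d → ℂ) : Fin n → Fin d → ℂ :=
  fun i => if i = δ then u else if i = δ + 1 then v else basisVec d 0

section cyclicState

variable {n d : ℕ} [NeZero n] {δ δ' : Fin n} {u u' v v' : Fin d → ℂ}

theorem thm2StateA_eq_cyclicState (δ : Fin n) (t : Fin d) :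
    thm2StateA n d δ t = cyclicState n d δ (fourierVec d t) (basisVec d (d - 1)) := rfl

theorem thm2StateB_eq_cyclicState (δ : Fin n) (q : Fin d) :
    thm2StateB n d δ q = cyclicState n d δ (fourierVec d 1) (basisVec d q) := rfl

@[simp]
theorem cyclicState_apply_self : cyclicState n d δ u v δ = u := if_pos rfl

theorem cyclicState_apply_add_one (hn : 2 ≤ n) : cyclicState n d δ u v (δ + 1) = v := by
  simp [cyclicState, Fin.add_one_ne_self hn]

theorem cyclicState_apply_of_ne {i : Fin n} (h : i ≠ δ) (h' : i ≠ δ + 1) :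
    cyclicState n d δ u v i = basisVec d 0 := by
  simp [cyclicState, h, h']

theorem tensorInner_cyclicState_eq_zero_of_slot_self (h : star u ⬝ᵥ u' = 0) :
    tensorInner (tensorProdState (cyclicState n d δ u v))
      (tensorProdState (cyclicState n d δ u' v')) = 0 :=
  tensorInner_tensorProdState_eq_zero δ (by simpa using h)

theorem tensorInner_cyclicState_eq_zero_of_slot_add_one (hn : 2 ≤ n)
    (h : star v ⬝ᵥ v' = 0) :
    tensorInner (tensorProdState (cyclicState n d δ u v))
      (tensorProdState (cyclicState n d δ u' v')) = 0 :=
  tensorInner_tensorProdState_eq_zero (δ + 1) (by simpa [cyclicState_apply_add_one hn] using h)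

theorem tensorInner_cyclicState_basisVec_eq_zero_of_ne (hn : 3 ≤ n) (hδ : δ ≠ δ') {k k' : ℕ}
    (hk : k ≠ 0) (hk' : k' ≠ 0) :
    tensorInner (tensorProdState (cyclicState n d δ u (basisVec d k)))
      (tensorProdState (cyclicState n d δ' u' (basisVec d k'))) = 0 := by
  have hsucc : δ + 1 ≠ δ' + 1 := fun h => hδ (add_right_cancel h)
  by_cases h : δ' + 1 = δ
  · have hδ'1 : δ + 1 ≠ δ' := fun h' => Fin.add_one_add_one_ne_self hn δ' (by rw [h, h'])
    refine tensorInner_tensorProdState_eq_zero (δ + 1) ?_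
    rw [cyclicState_apply_add_one (by omega), cyclicState_apply_of_ne hδ'1 hsucc]
    exact star_basisVec_dotProduct_basisVec hk
  · refine tensorInner_tensorProdState_eq_zero (δ' + 1) ?_
    rw [cyclicState_apply_add_one (by omega), cyclicState_apply_of_ne h hsucc.symm]
    exact star_basisVec_dotProduct_basisVec hk'.symm

end cyclicState

theorem thm2_states_pairwise_orthogonal (d n : ℕ) [NeZero n] (hd : 2 ≤ d) (hn : 3 ≤ n) :
    (∀ δ δ' : Fin n, ∀ t t' : Fin d, 1 ≤ (t : ℕ) → 1 ≤ (t' : ℕ) → (δ, t) ≠ (δ', t') →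
      tensorInner (tensorProdState (thm2StateA n d δ t))
        (tensorProdState (thm2StateA n d δ' t')) = 0) ∧
    (∀ δ δ' : Fin n, ∀ q q' : Fin d,
      1 ≤ (q : ℕ) → (q : ℕ) ≤ d - 2 → 1 ≤ (q' : ℕ) → (q' : ℕ) ≤ d - 2 →
      (δ, q) ≠ (δ', q') →
      tensorInner (tensorProdState (thm2StateB n d δ q))
        (tensorProdState (thm2StateB n d δ' q')) = 0) ∧
    (∀ δ δ' : Fin n, ∀ t q : Fin d, 1 ≤ (t : ℕ) → 1 ≤ (q : ℕ) → (q : ℕ) ≤ d - 2 →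
      tensorInner (tensorProdState (thm2StateA n d δ t))
        (tensorProdState (thm2StateB n d δ' q)) = 0) ∧
    (∀ δ : Fin n, ∀ t : Fin d, 1 ≤ (t : ℕ) →
      tensorInner (tensorProdState (thm2StateA n d δ t))
        (tensorProdState (thm2Stopper n d)) = 0) ∧
    (∀ δ : Fin n, ∀ q : Fin d, 1 ≤ (q : ℕ) → (q : ℕ) ≤ d - 2 →
      tensorInner (tensorProdState (thm2StateB n d δ q))
        (tensorProdState (thm2Stopper n d)) = 0) := by
  simp only [thm2StateA_eq_cyclicState, thm2StateB_eq_cyclicState]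
  refine ⟨fun δ δ' t t' ht ht' hne => ?_, fun δ δ' q q' hq hqd hq' hqd' hne => ?_,
    fun δ δ' t q ht hq hqd => ?_, fun δ t ht => ?_, fun δ q hq hqd => ?_⟩
  · obtain rfl | hδ := eq_or_ne δ δ'
    · refine tensorInner_cyclicState_eq_zero_of_slot_self
        (star_fourierVec_dotProduct_fourierVec t.isLt t'.isLt fun h => hne ?_)
      rw [Fin.ext h]
    · exact tensorInner_cyclicState_basisVec_eq_zero_of_ne hn hδ (by omega) (by omega)
  · obtain rfl | hδ := eq_or_ne δ δ'
    · refine tensorInner_cyclicState_eq_zero_of_slot_add_one (by omega)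
        (star_basisVec_dotProduct_basisVec fun h => hne ?_)
      rw [Fin.ext h]
    · exact tensorInner_cyclicState_basisVec_eq_zero_of_ne hn hδ (by omega) (by omega)
  · obtain rfl | hδ := eq_or_ne δ δ'
    · exact tensorInner_cyclicState_eq_zero_of_slot_add_one (by omega)
        (star_basisVec_dotProduct_basisVec (by omega))
    · exact tensorInner_cyclicState_basisVec_eq_zero_of_ne hn hδ (by omega) (by omega)
  · refine tensorInner_tensorProdState_eq_zero δ ?_
    rw [cyclicState_apply_self, thm2Stopper_apply]
    exact star_fourierVec_dotProduct_fourierVec t.isLt (by omega) (by omega)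
  · refine tensorInner_tensorProdState_eq_zero δ ?_
    rw [cyclicState_apply_self, thm2Stopper_apply]
    exact star_fourierVec_dotProduct_fourierVec (by omega) (by omega) (by omega)
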